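/- Let K be a kernel in L²(X×X, μ×μ) such that the associated integral operator 𝒦 on L²(X,μ), defined by 𝒦(f)(x) = ∫ K(x,y) f(y) dμ(y), satisfies ⟨𝒦(f), f⟩ ≥ 0 for all f ∈ L²(X,μ). Then K is hermitian μ×μ-almost everywhere, i.e., K(x,y) = conj(K(y,x)) for μ×μ-a.e. (x,y). -/

import Mathlib

/-!
Testing the reality of `⟨𝒦 f, f⟩` on `f = a • 𝟙_A + b • 𝟙_B`, for sets `A`, `B` of finite
measure, and polarizing in `a, b` gives `∫_{B×A} K = conj ∫_{A×B} K`. Hence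
`K - conj (K ∘ swap)` has zero integral over every rectangle of finite measure. Rectangles form a
π-system generating the product σ-algebra, so this difference vanishes a.e. on each square of a
σ-finite exhaustion of `X × X`.
-/

open MeasureTheory Complex Set Filter ComplexConjugate
open scoped ENNReal

namespace MeasureTheory

variable {α β E : Type*} [MeasurableSpace α] [MeasurableSpace β] [NormedAddCommGroup E]

theorem MemLp.integrableOn_of_measure_lt_top {μ : Measure α} {f : α → E} {p : ℝ≥0∞}
    (hp : 1 ≤ p) (hf : MemLp f p μ) {s : Set α} (hs : μ s < ∞) : IntegrableOn f s μ := by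
  have : IsFiniteMeasure (μ.restrict s) := ⟨by rwa [Measure.restrict_apply_univ]⟩
  exact (hf.restrict s).integrable hp

theorem MemLp.integrableOn_prod {μ : Measure α} {ν : Measure β} [SFinite ν] {f : α × β → E}
    {p : ℝ≥0∞} (hp : 1 ≤ p) (hf : MemLp f p (μ.prod ν)) {s : Set α} {t : Set β}
    (hs : μ s < ∞) (ht : ν t < ∞) : IntegrableOn f (s ×ˢ t) (μ.prod ν) :=
  hf.integrableOn_of_measure_lt_top hp (by rw [Measure.prod_prod]; exact ENNReal.mul_lt_top hs ht)

theorem MemLp.ae_memLp_prodMk_left {μ : Measure α} {ν : Measure β} [SFinite μ] [SFinite ν]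
    {f : α × β → E} {p : ℝ≥0∞} (hp0 : p ≠ 0) (hptop : p ≠ ∞) (hf : MemLp f p (μ.prod ν)) :
    ∀ᵐ x ∂μ, MemLp (fun y => f (x, y)) p ν := by
  have hnorm := (integrable_norm_rpow_iff hf.aestronglyMeasurable hp0 hptop).2 hf
  filter_upwards [hnorm.prod_right_ae, hf.aestronglyMeasurable.prodMk_left] with x hx hmeas
  exact (integrable_norm_rpow_iff hmeas hp0 hptop).1 hx

theorem IntegrableOn.integrableOn_setIntegral_prod_left {μ : Measure α} {ν : Measure β}
    [SFinite μ] [SFinite ν] [NormedSpace ℝ E] {f : α × β → E} {s : Set α} {t : Set β}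
    (hf : IntegrableOn f (s ×ˢ t) (μ.prod ν)) :
    IntegrableOn (fun x => ∫ y in t, f (x, y) ∂ν) s μ := by
  rw [IntegrableOn, ← Measure.prod_restrict] at hf
  exact hf.integral_prod_left

variable [NormedSpace ℝ E] [CompleteSpace E]

theorem Integrable.ae_eq_zero_of_forall_setIntegral_isPiSystem {μ : Measure α} {f : α → E}
    {S : Set (Set α)} (h_gen : ‹MeasurableSpace α› = MeasurableSpace.generateFrom S)
    (h_pi : IsPiSystem S) (hf : Integrable f μ) (h_univ : ∫ x, f x ∂μ = 0)
    (h_S : ∀ s ∈ S, ∫ x in s, f x ∂μ = 0) : f =ᵐ[μ] 0 := by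
  suffices ∀ s, MeasurableSet s → ∫ x in s, f x ∂μ = 0 from
    hf.ae_eq_zero_of_forall_setIntegral_eq_zero fun s hs _ => this s hs
  intro s hs
  induction s, hs using MeasurableSpace.induction_on_inter h_gen h_pi with
  | empty => simp
  | basic s hs => exact h_S s hs
  | compl s hs ihs =>
    have h_split := integral_add_compl hs hf
    rwa [ihs, zero_add, h_univ] at h_split
  | iUnion g g_disj g_meas hg => simp [integral_iUnion g_meas g_disj hf.integrableOn, hg]

theorem ae_eq_zero_of_forall_setIntegral_prod_eq_zero {μ : Measure α} {ν : Measure β}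
    [SigmaFinite μ] [SigmaFinite ν] {f : α × β → E}
    (hf : ∀ ⦃s t⦄, MeasurableSet s → MeasurableSet t → μ s < ∞ → ν t < ∞ →
      IntegrableOn f (s ×ˢ t) (μ.prod ν))
    (h_zero : ∀ ⦃s t⦄, MeasurableSet s → MeasurableSet t → μ s < ∞ → ν t < ∞ →
      ∫ p in s ×ˢ t, f p ∂(μ.prod ν) = 0) :
    f =ᵐ[μ.prod ν] 0 := by
  have h_cover : ⋃ n, spanningSets μ n ×ˢ spanningSets ν n = univ := by
    rw [iUnion_prod_of_monotone (monotone_spanningSets μ) (monotone_spanningSets ν),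
      iUnion_spanningSets, iUnion_spanningSets, univ_prod_univ]
  suffices ∀ n, f =ᵐ[(μ.prod ν).restrict (spanningSets μ n ×ˢ spanningSets ν n)] 0 by
    rw [← Measure.restrict_univ (μ := μ.prod ν), ← h_cover]
    exact (ae_restrict_iUnion_iff _ _).2 this
  intro n
  have hA := measurableSet_spanningSets μ n
  have hB := measurableSet_spanningSets ν n
  have hAf := measure_spanningSets_lt_top μ n
  have hBf := measure_spanningSets_lt_top ν n
  refine Integrable.ae_eq_zero_of_forall_setIntegral_isPiSystem generateFrom_prod.symm
    isPiSystem_prod (hf hA hB hAf hBf) (h_zero hA hB hAf hBf) ?_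
  rintro _ ⟨s, hs, t, ht, rfl⟩
  rw [Measure.restrict_restrict (hs.prod ht), prod_inter_prod]
  exact h_zero (hs.inter hA) (ht.inter hB) ((measure_mono inter_subset_right).trans_lt hAf)
    ((measure_mono inter_subset_right).trans_lt hBf)

theorem integral_mul_indicator_combination {𝕜 : Type*} [RCLike 𝕜] {ν : Measure α} {g : α → 𝕜}
    {A B : Set α} (hA : MeasurableSet A) (hB : MeasurableSet B) (hgA : IntegrableOn g A ν)
    (hgB : IntegrableOn g B ν) (a b : 𝕜) :
    ∫ x, g x * (a * A.indicator 1 x + b * B.indicator 1 x) ∂ν =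
      a * ∫ x in A, g x ∂ν + b * ∫ x in B, g x ∂ν := by
  have h_pointwise : (fun x => g x * (a * A.indicator 1 x + b * B.indicator 1 x)) =
      fun x => a * A.indicator g x + b * B.indicator g x := by
    funext x
    by_cases hxA : x ∈ A <;> by_cases hxB : x ∈ B <;> simp [hxA, hxB] <;> ring
  rw [h_pointwise, integral_add ((hgA.integrable_indicator hA).const_mul a)
    ((hgB.integrable_indicator hB).const_mul b), integral_const_mul, integral_const_mul,
    integral_indicator hA, integral_indicator hB]

end MeasureTheory

-- Polarization: a sesquilinear form on `ℂ²` that is real on the diagonal is hermitian.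
theorem Complex.eq_conj_of_forall_im_eq_zero {p q r s : ℂ}
    (h : ∀ a b : ℂ, (conj a * a * p + conj a * b * q + conj b * a * r + conj b * b * s).im = 0) :
    r = conj q := by
  have h₁₀ := h 1 0
  have h₀₁ := h 0 1
  have h₁₁ := h 1 1
  have h₁ᵢ := h 1 I
  simp only [map_one, map_zero, conj_I, one_mul, mul_one, zero_mul, mul_zero, add_zero,
    zero_add, neg_mul, I_mul_I, neg_neg, add_im, neg_im, mul_im, I_re, I_im] at h₁₀ h₀₁ h₁₁ h₁ᵢ
  apply Complex.ext <;> simp only [conj_re, conj_im] <;> linarith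

section IntegralOperator

variable {X : Type*} [MeasurableSpace X]

/-- The sesquilinear form `⟨𝒦 f, g⟩` of the integral operator with kernel `K`. -/
noncomputable def kernelForm (μ : Measure X) (K : X × X → ℂ) (f g : X → ℂ) : ℂ :=
  ∫ x, (∫ y, K (x, y) * f y ∂μ) * conj (g x) ∂μ

variable {μ : Measure X} [SFinite μ] {K : X × X → ℂ}

theorem kernelForm_indicator_combination (hK : MemLp K 2 (μ.prod μ)) {A B : Set X}
    (hA : MeasurableSet A) (hB : MeasurableSet B) (hAf : μ A < ∞) (hBf : μ B < ∞) (a b : ℂ) :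
    kernelForm μ K (fun x => a * A.indicator 1 x + b * B.indicator 1 x)
        (fun x => a * A.indicator 1 x + b * B.indicator 1 x) =
      conj a * a * ∫ p in A ×ˢ A, K p ∂(μ.prod μ) + conj a * b * ∫ p in A ×ˢ B, K p ∂(μ.prod μ) +
        conj b * a * ∫ p in B ×ˢ A, K p ∂(μ.prod μ) +
        conj b * b * ∫ p in B ×ˢ B, K p ∂(μ.prod μ) := by
  have h_rect : ∀ {S T : Set X}, μ S < ∞ → μ T < ∞ → IntegrableOn K (S ×ˢ T) (μ.prod μ) :=
    fun hS hT => hK.integrableOn_prod one_le_two hS hT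
  have h_slice : ∀ {S T : Set X}, μ S < ∞ → μ T < ∞ →
      IntegrableOn (fun x => ∫ y in T, K (x, y) ∂μ) S μ :=
    fun hS hT => (h_rect hS hT).integrableOn_setIntegral_prod_left
  have h_inner : ∀ᵐ x ∂μ, ∫ y, K (x, y) * (a * A.indicator 1 y + b * B.indicator 1 y) ∂μ =
      a * ∫ y in A, K (x, y) ∂μ + b * ∫ y in B, K (x, y) ∂μ := by
    filter_upwards [hK.ae_memLp_prodMk_left two_ne_zero ENNReal.ofNat_ne_top] with x hx
    exact integral_mul_indicator_combination hA hB
      (hx.integrableOn_of_measure_lt_top one_le_two hAf)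
      (hx.integrableOn_of_measure_lt_top one_le_two hBf) a b
  have h_conj : ∀ x, conj (a * A.indicator 1 x + b * B.indicator 1 x) =
      conj a * A.indicator 1 x + conj b * B.indicator 1 x := fun x => by
    by_cases hxA : x ∈ A <;> by_cases hxB : x ∈ B <;> simp [hxA, hxB]
  have h_outer : ∀ S, μ S < ∞ →
      ∫ x in S, (a * ∫ y in A, K (x, y) ∂μ + b * ∫ y in B, K (x, y) ∂μ) ∂μ =
        a * ∫ p in S ×ˢ A, K p ∂(μ.prod μ) + b * ∫ p in S ×ˢ B, K p ∂(μ.prod μ) := fun S hS => by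
    rw [integral_add ((h_slice hS hAf).const_mul a) ((h_slice hS hBf).const_mul b),
      integral_const_mul, integral_const_mul, setIntegral_prod K (h_rect hS hAf),
      setIntegral_prod K (h_rect hS hBf)]
  have h_image : ∀ {S}, μ S < ∞ → IntegrableOn
      (fun x => a * ∫ y in A, K (x, y) ∂μ + b * ∫ y in B, K (x, y) ∂μ) S μ := fun hS =>
    ((h_slice hS hAf).const_mul a).add ((h_slice hS hBf).const_mul b)
  rw [kernelForm, integral_congr_ae (h_inner.mono fun x hx => by rw [hx, h_conj]),
    integral_mul_indicator_combination hA hB (h_image hAf) (h_image hBf), h_outer A hAf,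
    h_outer B hBf]
  ring

theorem setIntegral_prod_swap_eq_conj_of_im_kernelForm_eq_zero (hK : MemLp K 2 (μ.prod μ))
    (h_im : ∀ f : X → ℂ, MemLp f 2 μ → (kernelForm μ K f f).im = 0) {A B : Set X}
    (hA : MeasurableSet A) (hB : MeasurableSet B) (hAf : μ A < ∞) (hBf : μ B < ∞) :
    ∫ p in B ×ˢ A, K p ∂(μ.prod μ) = conj (∫ p in A ×ˢ B, K p ∂(μ.prod μ)) :=
  Complex.eq_conj_of_forall_im_eq_zero fun a b => by
    rw [← kernelForm_indicator_combination hK hA hB hAf hBf a b]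
    exact h_im _ (((memLp_indicator_const 2 hA 1 (Or.inr hAf.ne)).const_mul a).add
      ((memLp_indicator_const 2 hB 1 (Or.inr hBf.ne)).const_mul b))

end IntegralOperator

/-- If `K ∈ L²(X×X, μ×μ)` and the integral operator `𝒦` on `L²(X,μ)` generated by `K`
satisfies `⟨𝒦 f, f⟩ ≥ 0` for every `f ∈ L²(X,μ)`, then `K` is hermitian `μ×μ`-a.e.,
i.e. `K(x,y) = conj (K(y,x))` for `μ×μ`-a.e. `(x,y)`. -/
theorem positive_integral_operator_kernel_hermitian_ae
    {X : Type*} [MeasurableSpace X] (μ : Measure X) [SigmaFinite μ]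
    (K : X × X → ℂ) (hK : MemLp K 2 (μ.prod μ))
    (hpos : ∀ f : X → ℂ, MemLp f 2 μ →
      0 ≤ (∫ x, (∫ y, K (x, y) * f y ∂μ) * (starRingEnd ℂ) (f x) ∂μ).re ∧
      (∫ x, (∫ y, K (x, y) * f y ∂μ) * (starRingEnd ℂ) (f x) ∂μ).im = 0) :
    ∀ᵐ p ∂(μ.prod μ), K p = (starRingEnd ℂ) (K (p.2, p.1)) := by
  have h_adj : MemLp (fun p : X × X => conj (K p.swap)) 2 (μ.prod μ) :=
    (hK.comp_measurePreserving Measure.measurePreserving_swap).star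
  have h_diff : (fun p => K p - conj (K p.swap)) =ᵐ[μ.prod μ] 0 := by
    refine ae_eq_zero_of_forall_setIntegral_prod_eq_zero
      (fun s t _ _ hs ht => (hK.sub h_adj).integrableOn_prod one_le_two hs ht)
      fun s t hs ht hsf htf => ?_
    rw [integral_sub (hK.integrableOn_prod one_le_two hsf htf)
      (h_adj.integrableOn_prod one_le_two hsf htf), integral_conj, setIntegral_prod_swap,
      setIntegral_prod_swap_eq_conj_of_im_kernelForm_eq_zero hK (fun f hf => (hpos f hf).2)
        ht hs htf hsf, sub_self]
  filter_upwards [h_diff] with p hp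
  exact sub_eq_zero.1 hp
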